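/- arXiv:2602.07880 — 2 statements merged into one kernel-verified Lean document; each statement's English description precedes it below -/
import Mathlib

section
/- Neighbor property of Farey fractions: let n be a positive integer and let a/b and c/d be rational numbers in [0,1] in lowest terms (gcd(a,b) = 1, gcd(c,d) = 1) with 1 ≤ b ≤ n, 1 ≤ d ≤ n and a/b < c/d. If there is no rational number p/q with 1 ≤ q ≤ n lying strictly between a/b and c/d, then b·c − a·d = 1. -/
/-!
Choose a Bézout solution `b x - a y = 1` with `n - b < y ≤ n`. Then `a/b < x/y` and `y ≤ n`, so
by the hypothesis `c/d ≤ x/y`. With `k = b c - a d ≥ 1` and `m = d x - c y ≥ 0` one has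
`d = b m + y k`; since `d ≤ n < b + y`, this forces `m = 0`, and then `c = k x`, `d = k y`, so `k`
divides the coprime pair `c, d` and `k = 1`.
-/

theorem Int.exists_sub_mul_eq_one_of_isCoprime {a b : ℤ} (hb : 0 < b) (hab : IsCoprime a b)
    (N : ℤ) : ∃ x y : ℤ, b * x - a * y = 1 ∧ N - b < y ∧ y ≤ N := by
  obtain ⟨u, v, huv⟩ := hab
  have hr₀ : 0 ≤ (N + u) % b := Int.emod_nonneg _ hb.ne'
  have hr₁ : (N + u) % b < b := Int.emod_lt_of_pos _ hb
  have hdiv : b * ((N + u) / b) + (N + u) % b = N + u := Int.mul_ediv_add_emod _ _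
  refine ⟨v + a * ((N + u) / b), -u + b * ((N + u) / b), ?_, by linarith, by linarith⟩
  linear_combination huv

theorem Int.sub_mul_eq_one_of_le_of_lt_add {a b c d x y : ℤ} (hb : 0 ≤ b) (hy : 0 ≤ y)
    (hcd : IsCoprime c d) (hxy : b * x - a * y = 1) (hlt : a * d < c * b) (hle : c * y ≤ x * d)
    (hd : d < b + y) : b * c - a * d = 1 := by
  have hd_eq : d = b * (d * x - c * y) + y * (b * c - a * d) := by linear_combination (-d) * hxy
  have hm : d * x - c * y = 0 := by
    by_contra hm
    have hm₀ : 0 ≤ d * x - c * y := by linarith [mul_comm d x]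
    have h₁ : b ≤ b * (d * x - c * y) := le_mul_of_one_le_right hb (by omega)
    have h₂ : y ≤ y * (b * c - a * d) := le_mul_of_one_le_right hy (by linarith)
    linarith
  have hc : c = (b * c - a * d) * x := by linear_combination -c * hxy + a * hm
  have hd' : d = (b * c - a * d) * y := by linear_combination -d * hxy + b * hm
  rcases Int.isUnit_iff.mp (hcd.isUnit_of_dvd' ⟨x, hc⟩ ⟨y, hd'⟩) with h | h
  · exact h
  · linarith

theorem farey_neighbor_general (n : ℕ) (a b c d : ℤ)
    (hb1 : 1 ≤ b) (hbn : b ≤ n) (hd1 : 1 ≤ d) (hdn : d ≤ n)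
    (hab : Int.gcd a b = 1) (hcd : Int.gcd c d = 1)
    (hlt : (a : ℚ) / b < (c : ℚ) / d)
    (hno : ¬ ∃ p q : ℤ, 1 ≤ q ∧ q ≤ n ∧
      (a : ℚ) / b < (p : ℚ) / q ∧ (p : ℚ) / q < (c : ℚ) / d) :
    b * c - a * d = 1 := by
  obtain ⟨x, y, hxy, hny, hyn⟩ :=
    Int.exists_sub_mul_eq_one_of_isCoprime hb1 (Int.isCoprime_iff_gcd_eq_one.mpr hab) n
  have hy : (0 : ℚ) < y := by exact_mod_cast (by omega : (0 : ℤ) < y)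
  have hb : (0 : ℚ) < b := by exact_mod_cast hb1
  have hd : (0 : ℚ) < d := by exact_mod_cast hd1
  have hax : (a : ℚ) / b < x / y := by
    rw [div_lt_div_iff₀ hb hy]
    exact_mod_cast (by linarith : a * y < x * b)
  have hcx : (c : ℚ) / d ≤ x / y := not_lt.mp fun h => hno ⟨x, y, by omega, hyn, hax, h⟩
  rw [div_lt_div_iff₀ hb hd] at hlt
  rw [div_le_div_iff₀ hd hy] at hcx
  exact Int.sub_mul_eq_one_of_le_of_lt_add (by omega) (by omega)
    (Int.isCoprime_iff_gcd_eq_one.mpr hcd) hxy (by exact_mod_cast hlt) (by exact_mod_cast hcx)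
    (by omega)

/-- Neighbor property of Farey fractions: if `a/b < c/d` are fractions in
`[0,1]` in lowest terms with denominators at most `n`, and no fraction with
denominator at most `n` lies strictly between them, then `b*c - a*d = 1`. -/
theorem farey_neighbor (n : ℕ) (hn : 0 < n) (a b c d : ℤ)
    (hb1 : 1 ≤ b) (hbn : b ≤ n) (hd1 : 1 ≤ d) (hdn : d ≤ n)
    (hab : Int.gcd a b = 1) (hcd : Int.gcd c d = 1)
    (ha0 : (0 : ℚ) ≤ (a : ℚ) / b) (hc1 : (c : ℚ) / d ≤ 1)
    (hlt : (a : ℚ) / b < (c : ℚ) / d)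
    (hno : ¬ ∃ p q : ℤ, 1 ≤ q ∧ q ≤ n ∧
      (a : ℚ) / b < (p : ℚ) / q ∧ (p : ℚ) / q < (c : ℚ) / d) :
    b * c - a * d = 1 :=
  farey_neighbor_general n a b c d hb1 hbn hd1 hdn hab hcd hlt hno
end

section
/- The asymptotic proportion of coprime pairs of positive integers is 6/π²: the sequence (1/n²)·#{(a, b) : 1 ≤ a ≤ n, 1 ≤ b ≤ n, gcd(a, b) = 1} tends to 6/π² as n → ∞. -/
/-!
Since `∑_{d ∣ k} μ d = [k = 1]`, summing over `d ∣ gcd a b` counts the coprime pairs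
exactly as `∑_{d ≤ n} μ(d) ⌊n/d⌋²`. After dividing by `n²` the `d`-th term tends to
`μ(d)/d²` and is dominated by `1/d²`, so by dominated convergence for series the density
tends to `∑ μ(d)/d² = 1/ζ(2) = 6/π²`.
-/

open Filter Real Finset ArithmeticFunction
open scoped ArithmeticFunction.Moebius ArithmeticFunction.zeta LSeries.notation

theorem sum_divisors_moebius {R : Type*} [Ring R] (m : ℕ) :
    ∑ d ∈ m.divisors, (μ d : R) = if m = 1 then 1 else 0 := by
  simpa only [coe_zeta_mul_apply, one_apply, intCoe_apply] using
    congr($(coe_zeta_mul_coe_moebius (R := R)) m)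

theorem divisors_gcd_eq_filter_Icc {a b m : ℕ} (ha : a ∈ Icc 1 m) :
    (a.gcd b).divisors = {d ∈ Icc 1 m | d ∣ a ∧ d ∣ b} := by
  rw [mem_Icc] at ha
  ext d
  simp only [Nat.mem_divisors, Nat.dvd_gcd_iff, mem_filter, mem_Icc]
  constructor
  · rintro ⟨hd, -⟩
    have := Nat.le_of_dvd (by omega) hd.1
    have := Nat.pos_of_dvd_of_pos hd.1 (by omega)
    exact ⟨⟨by omega, by omega⟩, hd⟩
  · rintro ⟨-, hd⟩
    exact ⟨hd, Nat.gcd_ne_zero_left (by omega)⟩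

theorem card_filter_Icc_dvd (n d : ℕ) : #{x ∈ Icc 1 n | d ∣ x} = n / d :=
  Nat.Ioc_filter_dvd_card_eq_div n d

theorem natCast_card_coprime_pairs_Icc {R : Type*} [Ring R] (m n : ℕ) :
    (#{p ∈ Icc 1 m ×ˢ Icc 1 n | Nat.gcd p.1 p.2 = 1} : R) =
      ∑ d ∈ Icc 1 m, (μ d : R) * (m / d : ℕ) * (n / d : ℕ) := by
  rw [natCast_card_filter]
  calc ∑ p ∈ Icc 1 m ×ˢ Icc 1 n, (if Nat.gcd p.1 p.2 = 1 then 1 else 0 : R)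
      = ∑ p ∈ Icc 1 m ×ˢ Icc 1 n,
          ∑ d ∈ Icc 1 m, if d ∣ p.1 ∧ d ∣ p.2 then (μ d : R) else 0 := by
        refine sum_congr rfl fun p hp => ?_
        rw [← sum_divisors_moebius, divisors_gcd_eq_filter_Icc (mem_product.mp hp).1,
          sum_filter]
    _ = ∑ d ∈ Icc 1 m, (μ d : R) * #{p ∈ Icc 1 m ×ˢ Icc 1 n | d ∣ p.1 ∧ d ∣ p.2} :=
        by
        rw [sum_comm]
        simp only [← sum_filter, sum_const, nsmul_eq_mul']
    _ = ∑ d ∈ Icc 1 m, (μ d : R) * (m / d : ℕ) * (n / d : ℕ) := by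
        simp only [filter_product, card_product, card_filter_Icc_dvd, Nat.cast_mul, mul_assoc]

theorem LSeries_moebius_eq_inv_riemannZeta {s : ℂ} (hs : 1 < s.re) :
    L ↗μ s = (riemannZeta s)⁻¹ := by
  rw [← LSeries_zeta_eq_riemannZeta hs]
  exact eq_inv_of_mul_eq_one_right (LSeries_zeta_mul_Lseries_moebius hs)

theorem hasSum_moebius_div_sq : HasSum (fun d : ℕ => (μ d : ℝ) / d ^ 2) (6 / π ^ 2) := by
  have hs : 1 < (2 : ℂ).re := by norm_num
  have h : HasSum (LSeries.term ↗μ 2) (L ↗μ 2) :=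
    (LSeriesSummable_moebius_iff.mpr hs).LSeriesHasSum
  rw [LSeries_moebius_eq_inv_riemannZeta hs, riemannZeta_two] at h
  rw [← Complex.hasSum_ofReal]
  convert h using 1
  · ext d
    rcases eq_or_ne d 0 with rfl | hd
    · simp
    · simp [LSeries.term_of_ne_zero hd, div_eq_mul_inv]
  · push_cast; ring

theorem natCast_div_div_le_one_div (n d : ℕ) : ((n / d : ℕ) : ℝ) / n ≤ 1 / d := by
  calc ((n / d : ℕ) : ℝ) / n ≤ (n / d : ℝ) / n := by gcongr; exact Nat.cast_div_le
    _ = n / n / d := div_right_comm ..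
    _ ≤ 1 / d := by gcongr; exact div_self_le_one _

theorem tendsto_natCast_div_div (d : ℕ) :
    Tendsto (fun n : ℕ => ((n / d : ℕ) : ℝ) / n) atTop (nhds (1 / d)) := by
  have h := (tendsto_nat_floor_mul_div_atTop (R := ℝ) (a := 1 / d) (by positivity)).comp
    tendsto_natCast_atTop_atTop
  refine h.congr fun n => ?_
  rw [Function.comp_apply, one_div_mul_eq_div, Nat.floor_div_eq_div]

theorem tendsto_tsum_moebius_mul_div_div_sq :
    Tendsto (fun n : ℕ => ∑' d, (μ d : ℝ) * (((n / d : ℕ) : ℝ) / n) ^ 2) atTop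
      (nhds (∑' d : ℕ, (μ d : ℝ) / d ^ 2)) := by
  refine tendsto_tsum_of_dominated_convergence (bound := fun d : ℕ => 1 / (d : ℝ) ^ 2)
    (Real.summable_one_div_nat_pow.mpr one_lt_two) (fun d => ?_) (.of_forall fun n d => ?_)
  · simpa only [div_pow, one_pow, mul_one_div] using
      ((tendsto_natCast_div_div d).pow 2).const_mul (μ d : ℝ)
  · have hμ : |(μ d : ℝ)| ≤ 1 := mod_cast abs_moebius_le_one
    have hq : (((n / d : ℕ) : ℝ) / n) ^ 2 ≤ (1 / d) ^ 2 :=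
      pow_le_pow_left₀ (by positivity) (natCast_div_div_le_one_div n d) 2
    rw [norm_mul, norm_pow, Real.norm_eq_abs, Real.norm_eq_abs, sq_abs, ← one_div_pow]
    exact (mul_le_of_le_one_left (sq_nonneg _) hμ).trans hq

theorem coprime_pairs_density_eq_tsum (n : ℕ) :
    (#{p ∈ Icc 1 n ×ˢ Icc 1 n | Nat.gcd p.1 p.2 = 1} : ℝ) / (n : ℝ) ^ 2 =
      ∑' d, (μ d : ℝ) * (((n / d : ℕ) : ℝ) / n) ^ 2 := by
  rw [natCast_card_coprime_pairs_Icc, sum_div, tsum_eq_sum (s := Icc 1 n)]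
  · exact sum_congr rfl fun d _ => by ring
  · intro d hd
    rcases Nat.eq_zero_or_pos d with rfl | hd₀
    · simp
    · rw [Nat.div_eq_of_lt (by simp only [mem_Icc, not_and, not_le] at hd; exact hd hd₀)]
      simp

/-- The asymptotic proportion of coprime pairs of positive integers is `6/π²`:
the number of pairs `(a, b)` with `1 ≤ a, b ≤ n` and `gcd a b = 1`, divided by
`n²`, tends to `6/π²` as `n → ∞`. -/
theorem coprime_pairs_density :
    Tendsto (fun n : ℕ =>
      (((Finset.Icc 1 n ×ˢ Finset.Icc 1 n).filter
          (fun p : ℕ × ℕ => Nat.gcd p.1 p.2 = 1)).card : ℝ) / (n : ℝ) ^ 2)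
      atTop (nhds (6 / π ^ 2)) := by
  rw [← hasSum_moebius_div_sq.tsum_eq]
  simpa only [coprime_pairs_density_eq_tsum] using tendsto_tsum_moebius_mul_div_div_sq
end
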